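/- arXiv:2604.02916 — 2 statements merged into one kernel-verified Lean document; each statement's English description precedes it below -/
import Mathlib

section
/- If g : [0,1] → ℝ is weakly degenerate at 0, i.e., continuous on [0,1], C¹ on (0,1], positive on (0,1], g(0)=0, and x·g'(x) ≤ K·g(x) for some K ∈ [0,1), then 1/g is integrable on (0,1); more precisely there is a constant C > 0 with g(x) ≥ C·x^K for x ∈ (0,1], hence ∫₀¹ dx/g(x) < ∞. -/
/-! The condition `x g' ≤ K g` says that `x ↦ g x * x ^ (-K)` has nonpositive derivative, so it
is nonincreasing on `(0,1]` and `g x ≥ g 1 * x ^ K` there; as `K < 1`, the majorant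
`x ^ (-K) / g 1` of `1 / g` is integrable near `0`. -/

open Set MeasureTheory

theorem antitoneOn_mul_rpow_neg_of_mul_deriv_le {g g' : ℝ → ℝ} {K : ℝ} {s : Set ℝ}
    (hs : Convex ℝ s) (hs0 : s ⊆ Ioi 0) (hderiv : ∀ x ∈ s, HasDerivAt g (g' x) x)
    (hWD : ∀ x ∈ s, x * g' x ≤ K * g x) :
    AntitoneOn (fun x => g x * x ^ (-K)) s := by
  have hderiv' : ∀ x ∈ s, HasDerivAt (fun x => g x * x ^ (-K))
      (x ^ (-K - 1) * (x * g' x - K * g x)) x := by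
    intro x hx
    have hx0 : 0 < x := hs0 hx
    refine ((hderiv x hx).mul
      (Real.hasDerivAt_rpow_const (p := -K) (Or.inl hx0.ne'))).congr_deriv ?_
    rw [Real.rpow_sub_one hx0.ne']
    field_simp
    ring
  refine antitoneOn_of_hasDerivWithinAt_nonpos hs
    (fun x hx => (hderiv' x hx).continuousAt.continuousWithinAt)
    (fun x hx => (hderiv' x (interior_subset hx)).hasDerivWithinAt) fun x hx => ?_
  have hx : x ∈ s := interior_subset hx
  exact mul_nonpos_of_nonneg_of_nonpos (Real.rpow_nonneg (hs0 hx).le _)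
    (sub_nonpos.2 (hWD x hx))

theorem mul_rpow_le_of_mul_deriv_le {g g' : ℝ → ℝ} {K b : ℝ}
    (hderiv : ∀ x ∈ Ioc 0 b, HasDerivAt g (g' x) x)
    (hWD : ∀ x ∈ Ioc 0 b, x * g' x ≤ K * g x) {x : ℝ} (hx : x ∈ Ioc 0 b) :
    g b * x ^ K ≤ g x * b ^ K := by
  have hb : b ∈ Ioc 0 b := ⟨hx.1.trans_le hx.2, le_rfl⟩
  have hanti := antitoneOn_mul_rpow_neg_of_mul_deriv_le (convex_Ioc 0 b)
    Ioc_subset_Ioi_self hderiv hWD hx hb hx.2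
  have hxK := Real.rpow_pos_of_pos hx.1 K
  have hbK := Real.rpow_pos_of_pos hb.1 K
  simp only [Real.rpow_neg hx.1.le, Real.rpow_neg hb.1.le, ← div_eq_mul_inv] at hanti
  rwa [div_le_div_iff₀ hbK hxK] at hanti

theorem integrableOn_one_div_of_mul_rpow_le {g : ℝ → ℝ} {C K b : ℝ} (hC : 0 < C)
    (hK : K < 1) (hg : ContinuousOn g (Ioo 0 b)) (hbound : ∀ x ∈ Ioo 0 b, C * x ^ K ≤ g x) :
    IntegrableOn (fun x => 1 / g x) (Ioo 0 b) := by
  rcases le_or_gt b 0 with hb | hb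
  · simp [Ioo_eq_empty_of_le hb]
  have hgpos : ∀ x ∈ Ioo 0 b, 0 < g x := fun x hx =>
    (mul_pos hC (Real.rpow_pos_of_pos hx.1 K)).trans_le (hbound x hx)
  have hmajorant : IntegrableOn (fun x => C⁻¹ * x ^ (-K)) (Ioo 0 b) :=
    ((intervalIntegral.integrableOn_Ioo_rpow_iff hb).2 (by linarith)).const_mul _
  have hcont : ContinuousOn (fun x => 1 / g x) (Ioo 0 b) :=
    continuousOn_const.div hg fun x hx => (hgpos x hx).ne'
  refine hmajorant.mono' (hcont.aestronglyMeasurable measurableSet_Ioo)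
    (ae_restrict_of_forall_mem measurableSet_Ioo fun x hx => ?_)
  rw [Real.norm_of_nonneg (one_div_pos.2 (hgpos x hx)).le, Real.rpow_neg hx.1.le, one_div,
    ← mul_inv]
  exact inv_anti₀ (mul_pos hC (Real.rpow_pos_of_pos hx.1 K)) (hbound x hx)

theorem stmt1_general (g g' : ℝ → ℝ) (K : ℝ) (hK1 : K < 1)
    (hderiv : ∀ x ∈ Ioc (0:ℝ) 1, HasDerivAt g (g' x) x)
    (hpos : ∀ x ∈ Ioc (0:ℝ) 1, 0 < g x)
    (hWD : ∀ x ∈ Ioc (0:ℝ) 1, x * g' x ≤ K * g x) :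
    ∃ C > 0, (∀ x ∈ Ioc (0:ℝ) 1, C * x ^ K ≤ g x) ∧
      IntegrableOn (fun x => 1 / g x) (Ioo 0 1) := by
  have hbound : ∀ x ∈ Ioc (0:ℝ) 1, g 1 * x ^ K ≤ g x := fun x hx => by
    simpa using mul_rpow_le_of_mul_deriv_le hderiv hWD hx
  refine ⟨g 1, hpos 1 ⟨one_pos, le_rfl⟩, hbound, ?_⟩
  exact integrableOn_one_div_of_mul_rpow_le (hpos 1 ⟨one_pos, le_rfl⟩) hK1
    ((HasDerivAt.continuousOn hderiv).mono Ioo_subset_Ioc_self)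
    fun x hx => hbound x (Ioo_subset_Ioc_self hx)

/-- Under weak degeneracy at 0 (with exponent `K ∈ [0,1)`), there is
`C > 0` with `g x ≥ C * x ^ K` on `(0,1]`, and `1/g` is integrable on `(0,1)`. -/
theorem stmt1 (g g' : ℝ → ℝ) (K : ℝ) (hK0 : 0 ≤ K) (hK1 : K < 1)
    (hgc : ContinuousOn g (Icc 0 1))
    (hderiv : ∀ x ∈ Ioc (0:ℝ) 1, HasDerivAt g (g' x) x)
    (hg'c : ContinuousOn g' (Ioc 0 1))
    (hpos : ∀ x ∈ Ioc (0:ℝ) 1, 0 < g x)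
    (hg0 : g 0 = 0)
    (hWD : ∀ x ∈ Ioc (0:ℝ) 1, x * g' x ≤ K * g x) :
    ∃ C > 0, (∀ x ∈ Ioc (0:ℝ) 1, C * x ^ K ≤ g x) ∧
      IntegrableOn (fun x => 1 / g x) (Ioo 0 1) :=
  stmt1_general g g' K hK1 hderiv hpos hWD
end

section
/- (Weighted Poincaré inequality for degenerate coefficient, weakly degenerate case) Let a : [0,1] → ℝ be continuous with a(0) = 0, a > 0 on (0,1], and suppose a(x) ≥ c·x^K on (0,1] for some c > 0 and K ∈ [0,1). Then there is a constant C > 0 such that for every C¹ function u on [0,1] with u(0) = u(1) = 0, ∫₀¹ u(x)² dx ≤ C ∫₀¹ a(x) u'(x)² dx. -/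
/-!
Since `u 0 = 0` we have `u x = ∫₀ˣ u'`, and Cauchy–Schwarz with weight `a` gives
`u(x)² ≤ (∫₀¹ 1/a) · ∫₀¹ a u'²` for every `x`. The bound `a x ≥ c x^K` with `K < 1` makes `1/a`
integrable with `∫₀¹ 1/a ≤ 1/(c(1-K))`, and integrating the pointwise bound over `(0,1)` yields the
inequality with `C = 1/(c(1-K))`.
-/

open Set MeasureTheory

section CauchySchwarz

variable {α : Type*} [MeasurableSpace α] {μ : Measure α}

theorem sq_integral_mul_le_integral_sq_mul_integral_sq {f g : α → ℝ}
    (hf : MemLp f 2 μ) (hg : MemLp g 2 μ) :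
    (∫ x, f x * g x ∂μ) ^ 2 ≤ (∫ x, f x ^ 2 ∂μ) * ∫ x, g x ^ 2 ∂μ := by
  have hholder := integral_mul_norm_le_Lp_mul_Lq Real.HolderConjugate.two_two
    (by simpa using hf) (by simpa using hg)
  simp only [Real.rpow_two, Real.norm_eq_abs, sq_abs, ← Real.sqrt_eq_rpow] at hholder
  have habs : |∫ x, f x * g x ∂μ| ≤ ∫ x, |f x| * |g x| ∂μ := by
    simp only [← abs_mul]
    exact abs_integral_le_integral_abs
  calc (∫ x, f x * g x ∂μ) ^ 2 = |∫ x, f x * g x ∂μ| ^ 2 := (sq_abs _).symm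
    _ ≤ (√(∫ x, f x ^ 2 ∂μ) * √(∫ x, g x ^ 2 ∂μ)) ^ 2 := by
      gcongr; exact habs.trans hholder
    _ = (∫ x, f x ^ 2 ∂μ) * ∫ x, g x ^ 2 ∂μ := by
      rw [mul_pow, Real.sq_sqrt (integral_nonneg fun _ ↦ sq_nonneg _),
        Real.sq_sqrt (integral_nonneg fun _ ↦ sq_nonneg _)]

/-- Cauchy–Schwarz with weight `w`, applied to `f = w^{-1/2} · (w^{1/2} f)`. -/
theorem sq_integral_le_integral_inv_mul_integral_mul_sq {f w : α → ℝ}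
    (hf : AEStronglyMeasurable f μ) (hw : ∀ᵐ x ∂μ, 0 < w x)
    (hw_inv : Integrable (fun x ↦ (w x)⁻¹) μ) (hwf : Integrable (fun x ↦ w x * f x ^ 2) μ) :
    (∫ x, f x ∂μ) ^ 2 ≤ (∫ x, (w x)⁻¹ ∂μ) * ∫ x, w x * f x ^ 2 ∂μ := by
  have hw_meas : AEMeasurable w μ :=
    hw_inv.aemeasurable.inv.congr (ae_of_all _ fun x ↦ inv_inv (w x))
  have hsqrt_meas : AEMeasurable (fun x ↦ √(w x)) μ := hw_meas.sqrt
  have hF : (fun x ↦ (√(w x))⁻¹ ^ 2) =ᵐ[μ] fun x ↦ (w x)⁻¹ := by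
    filter_upwards [hw] with x hx
    rw [inv_pow, Real.sq_sqrt hx.le]
  have hG : (fun x ↦ (√(w x) * f x) ^ 2) =ᵐ[μ] fun x ↦ w x * f x ^ 2 := by
    filter_upwards [hw] with x hx
    rw [mul_pow, Real.sq_sqrt hx.le]
  have hFG : (fun x ↦ (√(w x))⁻¹ * (√(w x) * f x)) =ᵐ[μ] f := by
    filter_upwards [hw] with x hx
    rw [inv_mul_cancel_left₀ (Real.sqrt_pos.2 hx).ne']
  have key := sq_integral_mul_le_integral_sq_mul_integral_sq
    (f := fun x ↦ (√(w x))⁻¹) (g := fun x ↦ √(w x) * f x)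
    ((memLp_two_iff_integrable_sq hsqrt_meas.inv.aestronglyMeasurable).2
      (hw_inv.congr hF.symm))
    ((memLp_two_iff_integrable_sq (hsqrt_meas.aestronglyMeasurable.mul hf)).2
      (hwf.congr hG.symm))
  rwa [integral_congr_ae hF, integral_congr_ae hG, integral_congr_ae hFG] at key

end CauchySchwarz

section PowerLowerBound

variable {a : ℝ → ℝ} {c K : ℝ}

theorem inv_le_inv_mul_rpow_neg_of_mul_rpow_le {x : ℝ} (hc : 0 < c) (hx : 0 < x)
    (hax : c * x ^ K ≤ a x) : (a x)⁻¹ ≤ c⁻¹ * x ^ (-K) := by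
  have hcx : 0 < c * x ^ K := mul_pos hc (Real.rpow_pos_of_pos hx K)
  calc (a x)⁻¹ ≤ (c * x ^ K)⁻¹ := inv_anti₀ hcx hax
    _ = c⁻¹ * x ^ (-K) := by rw [mul_inv, Real.rpow_neg hx.le]

theorem integrableOn_rpow_neg_Ioc_zero_one (hK : K < 1) :
    IntegrableOn (fun x : ℝ ↦ x ^ (-K)) (Ioc 0 1) :=
  (intervalIntegrable_iff_integrableOn_Ioc_of_le zero_le_one).1
    (intervalIntegral.intervalIntegrable_rpow' (by linarith))

theorem integral_rpow_neg_Ioc_zero_one (hK : K < 1) :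
    ∫ x in Ioc (0 : ℝ) 1, x ^ (-K) = (1 - K)⁻¹ := by
  rw [← intervalIntegral.integral_of_le zero_le_one, integral_rpow (Or.inl (by linarith)),
    Real.one_rpow, Real.zero_rpow (by linarith), sub_zero, neg_add_eq_sub, one_div]

theorem integrableOn_inv_of_mul_rpow_le (hc : 0 < c) (hK : K < 1)
    (ha : AEStronglyMeasurable a (volume.restrict (Ioc 0 1)))
    (hlow : ∀ x ∈ Ioc (0 : ℝ) 1, c * x ^ K ≤ a x) :
    IntegrableOn (fun x ↦ (a x)⁻¹) (Ioc 0 1) := by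
  refine ((integrableOn_rpow_neg_Ioc_zero_one hK).const_mul c⁻¹).mono'
    ha.aemeasurable.inv.aestronglyMeasurable ?_
  refine (ae_restrict_iff' measurableSet_Ioc).2 (ae_of_all _ fun x hx ↦ ?_)
  have hcx : 0 < c * x ^ K := mul_pos hc (Real.rpow_pos_of_pos hx.1 K)
  rw [Real.norm_of_nonneg (inv_nonneg.2 (hcx.trans_le (hlow x hx)).le)]
  exact inv_le_inv_mul_rpow_neg_of_mul_rpow_le hc hx.1 (hlow x hx)

theorem setIntegral_inv_le_of_mul_rpow_le (hc : 0 < c) (hK : K < 1)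
    (ha : AEStronglyMeasurable a (volume.restrict (Ioc 0 1)))
    (hlow : ∀ x ∈ Ioc (0 : ℝ) 1, c * x ^ K ≤ a x) :
    ∫ x in Ioc (0 : ℝ) 1, (a x)⁻¹ ≤ (c * (1 - K))⁻¹ := by
  calc ∫ x in Ioc (0 : ℝ) 1, (a x)⁻¹ ≤ ∫ x in Ioc (0 : ℝ) 1, c⁻¹ * x ^ (-K) :=
        setIntegral_mono_on (integrableOn_inv_of_mul_rpow_le hc hK ha hlow)
          ((integrableOn_rpow_neg_Ioc_zero_one hK).const_mul c⁻¹) measurableSet_Ioc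
          fun x hx ↦ inv_le_inv_mul_rpow_neg_of_mul_rpow_le hc hx.1 (hlow x hx)
    _ = (c * (1 - K))⁻¹ := by
      rw [integral_const_mul, integral_rpow_neg_Ioc_zero_one hK, mul_inv]

end PowerLowerBound

theorem sq_le_integral_inv_mul_integral_mul_deriv_sq {u u' w : ℝ → ℝ} {l r x : ℝ}
    (hx : x ∈ Icc l r) (hu : ∀ y ∈ Icc l r, HasDerivWithinAt u (u' y) (Icc l r) y)
    (hu' : ContinuousOn u' (Icc l r)) (hul : u l = 0) (hw : ContinuousOn w (Icc l r))
    (hw_pos : ∀ y ∈ Ioc l r, 0 < w y) (hw_inv : IntegrableOn (fun y ↦ (w y)⁻¹) (Ioc l r)) :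
    u x ^ 2 ≤ (∫ y in Ioc l r, (w y)⁻¹) * ∫ y in Ioc l r, w y * u' y ^ 2 := by
  have hsub : Ioc l x ⊆ Ioc l r := Ioc_subset_Ioc_right hx.2
  have hwu : IntegrableOn (fun y ↦ w y * u' y ^ 2) (Ioc l r) :=
    ((hw.mul (hu'.pow 2)).integrableOn_Icc).mono_set Ioc_subset_Icc_self
  have hftc : u x = ∫ y in Ioc l x, u' y := by
    have hsubIcc : Icc l x ⊆ Icc l r := Icc_subset_Icc_right hx.2
    rw [← intervalIntegral.integral_of_le hx.1,
      intervalIntegral.integral_eq_sub_of_hasDerivAt_of_le hx.1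
        (fun y hy ↦ (hu y (hsubIcc hy)).continuousWithinAt.mono hsubIcc)
        (fun y hy ↦ (hu y ⟨hy.1.le, hy.2.le.trans hx.2⟩).hasDerivAt
          (Icc_mem_nhds hy.1 (hy.2.trans_le hx.2)))
        ((hu'.mono (by rwa [uIcc_of_le hx.1])).intervalIntegrable), hul, sub_zero]
  have hcs := sq_integral_le_integral_inv_mul_integral_mul_sq
    ((hu'.mono (hsub.trans Ioc_subset_Icc_self)).aestronglyMeasurable measurableSet_Ioc)
    ((ae_restrict_iff' measurableSet_Ioc).2 (ae_of_all _ fun y hy ↦ hw_pos y (hsub hy)))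
    (hw_inv.mono_set hsub) (hwu.mono_set hsub)
  have hinv_nonneg : ∀ y ∈ Ioc l r, 0 ≤ (w y)⁻¹ := fun y hy ↦ (inv_pos.2 (hw_pos y hy)).le
  have hwu_nonneg : ∀ y ∈ Ioc l r, 0 ≤ w y * u' y ^ 2 := fun y hy ↦
    mul_nonneg (hw_pos y hy).le (sq_nonneg _)
  rw [← hftc] at hcs
  refine hcs.trans (mul_le_mul ?_ ?_ ?_ ?_)
  · exact setIntegral_mono_set hw_inv
      ((ae_restrict_iff' measurableSet_Ioc).2 (ae_of_all _ hinv_nonneg)) hsub.eventuallyLE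
  · exact setIntegral_mono_set hwu
      ((ae_restrict_iff' measurableSet_Ioc).2 (ae_of_all _ hwu_nonneg)) hsub.eventuallyLE
  · exact setIntegral_nonneg measurableSet_Ioc fun y hy ↦ hwu_nonneg y (hsub hy)
  · exact setIntegral_nonneg measurableSet_Ioc hinv_nonneg

theorem stmt12_general (a : ℝ → ℝ) (c K : ℝ) (hc : 0 < c) (hK1 : K < 1)
    (hac : ContinuousOn a (Icc 0 1))
    (halow : ∀ x ∈ Ioc (0:ℝ) 1, c * x ^ K ≤ a x) :
    ∃ C > 0, ∀ u u' : ℝ → ℝ,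
      (∀ x ∈ Icc (0:ℝ) 1, HasDerivWithinAt u (u' x) (Icc 0 1) x) →
      ContinuousOn u' (Icc 0 1) →
      u 0 = 0 → u 1 = 0 →
      ∫ x in Ioo (0:ℝ) 1, (u x) ^ 2 ≤ C * ∫ x in Ioo (0:ℝ) 1, a x * (u' x) ^ 2 := by
  have ha_meas :=
    (hac.mono Ioc_subset_Icc_self).aestronglyMeasurable (μ := volume) measurableSet_Ioc
  have ha_pos : ∀ x ∈ Ioc (0:ℝ) 1, 0 < a x := fun x hx ↦
    (mul_pos hc (Real.rpow_pos_of_pos hx.1 K)).trans_le (halow x hx)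
  refine ⟨(c * (1 - K))⁻¹, inv_pos.2 (mul_pos hc (by linarith)), fun u u' hu hu' hu0 _ ↦ ?_⟩
  rw [← integral_Ioc_eq_integral_Ioo (f := fun x ↦ a x * u' x ^ 2)]
  set E := ∫ x in Ioc (0:ℝ) 1, a x * u' x ^ 2
  have hE : 0 ≤ E := setIntegral_nonneg measurableSet_Ioc fun x hx ↦
    mul_nonneg (ha_pos x hx).le (sq_nonneg _)
  have hpointwise : ∀ x ∈ Ioo (0:ℝ) 1, u x ^ 2 ≤ (c * (1 - K))⁻¹ * E := fun x hx ↦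
    (sq_le_integral_inv_mul_integral_mul_deriv_sq (Ioo_subset_Icc_self hx) hu hu' hu0 hac ha_pos
      (integrableOn_inv_of_mul_rpow_le hc hK1 ha_meas halow)).trans
      (mul_le_mul_of_nonneg_right (setIntegral_inv_le_of_mul_rpow_le hc hK1 ha_meas halow) hE)
  have hu_cont : ContinuousOn u (Icc 0 1) := fun x hx ↦ (hu x hx).continuousWithinAt
  calc ∫ x in Ioo (0:ℝ) 1, u x ^ 2 ≤ ∫ _ in Ioo (0:ℝ) 1, (c * (1 - K))⁻¹ * E :=
        setIntegral_mono_on ((hu_cont.pow 2).integrableOn_Icc.mono_set Ioo_subset_Icc_self)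
          (integrableOn_const (by simp)) measurableSet_Ioo hpointwise
    _ = (c * (1 - K))⁻¹ * E := by simp

/-- Weighted Poincaré inequality, weakly degenerate case:
if `a` is continuous on `[0,1]`, `a 0 = 0`, `a > 0` on `(0,1]`, and
`a x ≥ c x^K` with `c > 0`, `K ∈ [0,1)`, then there is `C > 0` such that
`∫₀¹ u² ≤ C ∫₀¹ a (u')²` for all C¹ functions `u` with `u 0 = u 1 = 0`. -/
theorem stmt12 (a : ℝ → ℝ) (c K : ℝ) (hc : 0 < c) (hK0 : 0 ≤ K) (hK1 : K < 1)
    (hac : ContinuousOn a (Icc 0 1)) (ha0 : a 0 = 0)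
    (hapos : ∀ x ∈ Ioc (0:ℝ) 1, 0 < a x)
    (halow : ∀ x ∈ Ioc (0:ℝ) 1, c * x ^ K ≤ a x) :
    ∃ C > 0, ∀ u u' : ℝ → ℝ,
      (∀ x ∈ Icc (0:ℝ) 1, HasDerivWithinAt u (u' x) (Icc 0 1) x) →
      ContinuousOn u' (Icc 0 1) →
      u 0 = 0 → u 1 = 0 →
      ∫ x in Ioo (0:ℝ) 1, (u x) ^ 2 ≤ C * ∫ x in Ioo (0:ℝ) 1, a x * (u' x) ^ 2 :=
  stmt12_general a c K hc hK1 hac halow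
end
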